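/- Given bipartite Euler system data over R satisfying hypotheses (DU) and (LI), for every n ∈ N^odd and ℓ ∈ L∖n the cyclic R-modules loc^unr_ℓ(Stub_n) and Stub_{n∪{ℓ}} are isomorphic, and for every n ∈ N^even and ℓ ∈ L∖n the cyclic R-modules loc^ord_ℓ(Stub_{n∪{ℓ}}) and Stub_n are isomorphic. -/

import Mathlib

/-!
Let `𝔪 = (π)` and let `R` have length `k`. For a cyclic submodule `R ∙ x ≠ 0`, Nakayama gives
`𝔪 • (R ∙ x) < R ∙ x`, and every smaller submodule lies in `𝔪 • (R ∙ x)` (otherwise it contains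
a unit multiple of `x`). Applied to `𝔪^c = R ∙ π^c` this gives `length 𝔪^c = k - c`, hence
`𝔪^k = 0` and every ideal is a power `𝔪^c` with `c = k - length`. Identifying `H_ℓ` with `R`,
the image of `loc_ℓ` is such an ideal `𝔪^c`, so `loc_ℓ(𝔪^p • Sel) = 𝔪^(p + c)`, and (DU) with
(LI) say precisely that `p + c` is the exponent of the stub on the other side.
-/

/-- The length of a module: the Krull dimension of its lattice of submodules. -/
noncomputable def moduleLength (R M : Type*) [Ring R] [AddCommGroup M] [Module R M] : ℕ∞ :=
  WithBot.unbotD 0 (Order.krullDim (Submodule R M))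

theorem moduleLength_eq_length (R M : Type*) [Ring R] [AddCommGroup M] [Module R M] :
    moduleLength R M = Module.length R M := by
  rw [moduleLength, ← Module.coe_length]
  rfl

theorem Order.height_eq_height_add_one_of_isGreatest {α : Type*} [Preorder α] {a b : α}
    (h : IsGreatest (Set.Iio b) a) : height b = height a + 1 := by
  refine le_antisymm ?_ (height_add_one_le h.1)
  rw [height_eq_iSup_lt_height]
  exact iSup₂_le fun y hy => add_le_add (height_mono (h.2 hy)) le_rfl

namespace IsLocalRing

section Module

variable {R M : Type*} [CommRing R] [IsLocalRing R] [AddCommGroup M] [Module R M]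

theorem le_maximalIdeal_smul_of_lt_span_singleton {N : Submodule R M} {x : M}
    (h : N < R ∙ x) : N ≤ maximalIdeal R • (R ∙ x) := by
  intro y hy
  obtain ⟨r, rfl⟩ := Submodule.mem_span_singleton.1 (h.le hy)
  have hr : r ∈ maximalIdeal R := by
    by_contra hr
    have hx : x ∈ N := (N.smul_mem_iff_of_isUnit (notMem_maximalIdeal.1 hr)).1 hy
    exact h.not_ge ((Submodule.span_singleton_le_iff_mem x N).2 hx)
  exact Submodule.smul_mem_smul hr (Submodule.mem_span_singleton_self x)

theorem maximalIdeal_smul_span_singleton_lt {x : M} (hx : x ≠ 0) :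
    maximalIdeal R • (R ∙ x) < R ∙ x := by
  refine Submodule.smul_le_right.lt_of_ne fun h => hx ?_
  have := Submodule.eq_bot_of_le_smul_of_le_jacobson_bot _ _ (Submodule.fg_span_singleton x)
    h.ge (maximalIdeal_le_jacobson ⊥)
  exact Submodule.span_singleton_eq_bot.1 this

theorem length_span_singleton {x : M} (hx : x ≠ 0) :
    Module.length R ↥(R ∙ x) = Module.length R ↥(maximalIdeal R • (R ∙ x)) + 1 := by
  rw [Module.length_submodule, Module.length_submodule]
  exact Order.height_eq_height_add_one_of_isGreatest
    ⟨maximalIdeal_smul_span_singleton_lt hx, fun _ => le_maximalIdeal_smul_of_lt_span_singleton⟩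

end Module

variable {R : Type*} [CommRing R] [IsLocalRing R]

theorem maximalIdeal_pow_eq_span_singleton {π : R} (hπ : maximalIdeal R = R ∙ π) (c : ℕ) :
    maximalIdeal R ^ c = R ∙ π ^ c := by
  rw [hπ, Ideal.submodule_span_eq, Ideal.span_singleton_pow]

theorem le_maximalIdeal_pow_succ_of_lt (hprin : (maximalIdeal R).IsPrincipal) {J : Ideal R}
    {c : ℕ} (h : J < maximalIdeal R ^ c) : J ≤ maximalIdeal R ^ (c + 1) := by
  obtain ⟨π, hπ⟩ := hprin
  rw [maximalIdeal_pow_eq_span_singleton hπ] at h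
  have := le_maximalIdeal_smul_of_lt_span_singleton h
  rwa [← maximalIdeal_pow_eq_span_singleton hπ, Ideal.smul_eq_mul, ← pow_succ'] at this

theorem length_maximalIdeal_pow_succ (hprin : (maximalIdeal R).IsPrincipal) (c : ℕ) :
    Module.length R ↥(maximalIdeal R ^ (c + 1)) = Module.length R ↥(maximalIdeal R ^ c) - 1 := by
  obtain ⟨π, hπ⟩ := hprin
  have hpow := maximalIdeal_pow_eq_span_singleton hπ
  by_cases h : π ^ c = 0
  · have h0 : maximalIdeal R ^ c = ⊥ := by rw [hpow, h, Submodule.span_zero_singleton]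
    have h1 : maximalIdeal R ^ (c + 1) = ⊥ := le_bot_iff.1 (h0 ▸ Ideal.pow_le_pow_right c.le_succ)
    rw [h0, h1, Module.length_bot, zero_tsub]
  · have := length_span_singleton (R := R) h
    rw [← hpow, Ideal.smul_eq_mul, ← pow_succ'] at this
    rw [this, (ENat.addLECancellable_of_ne_top ENat.one_ne_top).add_tsub_cancel_right]

theorem length_maximalIdeal_pow (hprin : (maximalIdeal R).IsPrincipal) {k : ℕ}
    (hk : Module.length R R = k) (c : ℕ) :
    Module.length R ↥(maximalIdeal R ^ c) = (k - c : ℕ) := by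
  induction c with
  | zero => rw [pow_zero, Ideal.one_eq_top, Module.length_top, hk, Nat.sub_zero]
  | succ c ih =>
    rw [length_maximalIdeal_pow_succ hprin, ih]
    norm_cast

theorem maximalIdeal_pow_eq_bot (hprin : (maximalIdeal R).IsPrincipal) {k : ℕ}
    (hk : Module.length R R = k) : maximalIdeal R ^ k = ⊥ := by
  have := length_maximalIdeal_pow hprin hk k
  rwa [Nat.sub_self, Nat.cast_zero, Module.length_eq_zero_iff,
    Submodule.subsingleton_iff_eq_bot] at this

theorem exists_eq_maximalIdeal_pow (hprin : (maximalIdeal R).IsPrincipal) {k : ℕ}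
    (hk : Module.length R R = k) (J : Ideal R) : ∃ c ≤ k, J = maximalIdeal R ^ c := by
  classical
  have hnil := maximalIdeal_pow_eq_bot hprin hk
  by_cases hJ : ∃ c, ¬ J ≤ maximalIdeal R ^ (c + 1)
  · set c := Nat.find hJ with hc
    have hle : J ≤ maximalIdeal R ^ c := by
      rcases c with _ | c
      · simp
      · exact not_not.1 (Nat.find_min hJ (hc ▸ c.lt_succ_self))
    have hck : c ≤ k := by
      by_contra! hkc
      exact Nat.find_spec hJ
        (hle.trans ((Ideal.pow_le_pow_right hkc.le).trans (hnil.le.trans bot_le)))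
    refine ⟨c, hck, hle.eq_of_not_lt fun hlt => ?_⟩
    exact Nat.find_spec hJ (le_maximalIdeal_pow_succ_of_lt hprin hlt)
  · push Not at hJ
    have hJbot : J = ⊥ :=
      le_bot_iff.1 (hnil ▸ (hJ k).trans (Ideal.pow_le_pow_right k.le_succ))
    exact ⟨k, le_rfl, hJbot.trans hnil.symm⟩

theorem maximalIdeal_pow_smul_eq_of_length (hprin : (maximalIdeal R).IsPrincipal) {k : ℕ}
    (hk : Module.length R R = k) {J : Ideal R} {p q : ℕ}
    (h : (q : ℕ∞) + Module.length R J = p + k) : maximalIdeal R ^ p • J = maximalIdeal R ^ q := by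
  obtain ⟨c, hck, rfl⟩ := exists_eq_maximalIdeal_pow hprin hk J
  rw [length_maximalIdeal_pow hprin hk] at h
  have hq : q = p + c := by
    have : q + (k - c) = p + k := by exact_mod_cast h
    omega
  rw [Ideal.smul_eq_mul, ← pow_add, hq]

theorem nonempty_linearEquiv_maximalIdeal_pow_smul (hprin : (maximalIdeal R).IsPrincipal)
    {k : ℕ} (hk : Module.length R R = k) {B : Type*} [AddCommGroup B] [Module R B]
    (e : B ≃ₗ[R] R) {N : Submodule R B} {p q : ℕ}
    (h : (q : ℕ∞) + Module.length R N = p + k) :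
    Nonempty (↥(maximalIdeal R ^ p • N) ≃ₗ[R] ↥(maximalIdeal R ^ q)) := by
  have hJ := maximalIdeal_pow_smul_eq_of_length hprin hk (J := N.map (e : B →ₗ[R] R))
    (by rwa [← (e.submoduleMap N).length_eq])
  exact ⟨(e.submoduleMap _).trans (LinearEquiv.ofEq _ _ (by rw [Submodule.map_smul'', hJ]))⟩

end IsLocalRing

theorem stub_shift_general
    {R : Type*} [CommRing R] [IsLocalRing R]
    (hprin : (IsLocalRing.maximalIdeal R).IsPrincipal)
    (k : ℕ) (hk : moduleLength R R = (k : ℕ∞))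
    {L : Type*} [DecidableEq L]
    (even : Finset L → Prop)
    (Sel : Finset L → Type*) [∀ n, AddCommGroup (Sel n)] [∀ n, Module R (Sel n)]
    (m : Finset L → ℕ)
    (Hunr Hord : L → Type*)
    [∀ ℓ, AddCommGroup (Hunr ℓ)] [∀ ℓ, Module R (Hunr ℓ)]
    [∀ ℓ, AddCommGroup (Hord ℓ)] [∀ ℓ, Module R (Hord ℓ)]
    (bUnr : ∀ ℓ, Nonempty (Module.Basis (Fin 1) R (Hunr ℓ)))
    (bOrd : ∀ ℓ, Nonempty (Module.Basis (Fin 1) R (Hord ℓ)))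
    (locUnr : ∀ (n : Finset L) (ℓ : L), ℓ ∉ n → (Sel n →ₗ[R] Hunr ℓ))
    (locOrd : ∀ (n : Finset L) (ℓ : L), ℓ ∉ n → (Sel (insert ℓ n) →ₗ[R] Hord ℓ))
    -- (DU)
    (hDU : ∀ (n : Finset L) (ℓ : L) (h : ℓ ∉ n),
      moduleLength R (LinearMap.range (locUnr n ℓ h)) +
        moduleLength R (LinearMap.range (locOrd n ℓ h)) = (k : ℕ∞))
    -- (LI)
    (hLI : ∀ (n : Finset L) (ℓ : L) (h : ℓ ∉ n),
      (even n → (m n : ℕ∞) =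
        (m (insert ℓ n) : ℕ∞) + moduleLength R (LinearMap.range (locUnr n ℓ h))) ∧
      (¬ even n → (m (insert ℓ n) : ℕ∞) =
        (m n : ℕ∞) + moduleLength R (LinearMap.range (locOrd n ℓ h)))) :
    (∀ (n : Finset L), ¬ even n → ∀ (ℓ : L) (h : ℓ ∉ n),
      Nonempty
        ((Submodule.map (locUnr n ℓ h)
            ((IsLocalRing.maximalIdeal R) ^ (m n) • (⊤ : Submodule R (Sel n)))) ≃ₗ[R]
          ↥((IsLocalRing.maximalIdeal R) ^ (m (insert ℓ n)) : Ideal R))) ∧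
    (∀ (n : Finset L), even n → ∀ (ℓ : L) (h : ℓ ∉ n),
      Nonempty
        ((Submodule.map (locOrd n ℓ h)
            ((IsLocalRing.maximalIdeal R) ^ (m (insert ℓ n)) •
              (⊤ : Submodule R (Sel (insert ℓ n))))) ≃ₗ[R]
          ↥((IsLocalRing.maximalIdeal R) ^ (m n) : Ideal R))) := by
  simp only [moduleLength_eq_length] at hk hDU hLI
  refine ⟨fun n hodd ℓ h => ?_, fun n heven ℓ h => ?_⟩
  · rw [Submodule.map_smul'', Submodule.map_top]
    refine IsLocalRing.nonempty_linearEquiv_maximalIdeal_pow_smul hprin hk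
      ((bUnr ℓ).some.equivFun.trans (LinearEquiv.funUnique (Fin 1) R R)) ?_
    rw [(hLI n ℓ h).2 hodd, add_assoc, add_comm (Module.length R (LinearMap.range (locOrd n ℓ h))),
      hDU]
  · rw [Submodule.map_smul'', Submodule.map_top]
    refine IsLocalRing.nonempty_linearEquiv_maximalIdeal_pow_smul hprin hk
      ((bOrd ℓ).some.equivFun.trans (LinearEquiv.funUnique (Fin 1) R R)) ?_
    rw [(hLI n ℓ h).1 heven, add_assoc, hDU]

/-- Given bipartite Euler system data over `R` satisfying (DU) and (LI):
for odd `n` and `ℓ ∉ n`, `loc^unr_ℓ(Stub_n) ≅ Stub_{n∪{ℓ}}`, and for even `n` and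
`ℓ ∉ n`, `loc^ord_ℓ(Stub_{n∪{ℓ}}) ≅ Stub_n`. -/
theorem stub_shift
    {R : Type*} [CommRing R] [IsLocalRing R] [IsArtinianRing R]
    (hprin : (IsLocalRing.maximalIdeal R).IsPrincipal)
    (k : ℕ) (hk : moduleLength R R = (k : ℕ∞))
    {L : Type*} [Infinite L] [DecidableEq L]
    (even : Finset L → Prop)
    (hflip : ∀ (n : Finset L) (ℓ : L), ℓ ∉ n → (even (insert ℓ n) ↔ ¬ even n))
    (Sel : Finset L → Type*) [∀ n, AddCommGroup (Sel n)] [∀ n, Module R (Sel n)]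
    (M : Finset L → Type*) [∀ n, AddCommGroup (M n)] [∀ n, Module R (M n)]
    (m : Finset L → ℕ) (hm : ∀ n, moduleLength R (M n) = (m n : ℕ∞))
    (isoEven : ∀ n, even n → Nonempty (Sel n ≃ₗ[R] M n × M n))
    (isoOdd : ∀ n, ¬ even n → Nonempty (Sel n ≃ₗ[R] R × M n × M n))
    (Hunr Hord : L → Type*)
    [∀ ℓ, AddCommGroup (Hunr ℓ)] [∀ ℓ, Module R (Hunr ℓ)]
    [∀ ℓ, AddCommGroup (Hord ℓ)] [∀ ℓ, Module R (Hord ℓ)]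
    (bUnr : ∀ ℓ, Nonempty (Module.Basis (Fin 1) R (Hunr ℓ)))
    (bOrd : ∀ ℓ, Nonempty (Module.Basis (Fin 1) R (Hord ℓ)))
    (locUnr : ∀ (n : Finset L) (ℓ : L), ℓ ∉ n → (Sel n →ₗ[R] Hunr ℓ))
    (locOrd : ∀ (n : Finset L) (ℓ : L), ℓ ∉ n → (Sel (insert ℓ n) →ₗ[R] Hord ℓ))
    -- (DU)
    (hDU : ∀ (n : Finset L) (ℓ : L) (h : ℓ ∉ n),
      moduleLength R (LinearMap.range (locUnr n ℓ h)) +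
        moduleLength R (LinearMap.range (locOrd n ℓ h)) = (k : ℕ∞))
    -- (LI)
    (hLI : ∀ (n : Finset L) (ℓ : L) (h : ℓ ∉ n),
      (even n → (m n : ℕ∞) =
        (m (insert ℓ n) : ℕ∞) + moduleLength R (LinearMap.range (locUnr n ℓ h))) ∧
      (¬ even n → (m (insert ℓ n) : ℕ∞) =
        (m n : ℕ∞) + moduleLength R (LinearMap.range (locOrd n ℓ h)))) :
    (∀ (n : Finset L), ¬ even n → ∀ (ℓ : L) (h : ℓ ∉ n),
      Nonempty
        ((Submodule.map (locUnr n ℓ h)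
            ((IsLocalRing.maximalIdeal R) ^ (m n) • (⊤ : Submodule R (Sel n)))) ≃ₗ[R]
          ↥((IsLocalRing.maximalIdeal R) ^ (m (insert ℓ n)) : Ideal R))) ∧
    (∀ (n : Finset L), even n → ∀ (ℓ : L) (h : ℓ ∉ n),
      Nonempty
        ((Submodule.map (locOrd n ℓ h)
            ((IsLocalRing.maximalIdeal R) ^ (m (insert ℓ n)) •
              (⊤ : Submodule R (Sel (insert ℓ n))))) ≃ₗ[R]
          ↥((IsLocalRing.maximalIdeal R) ^ (m n) : Ideal R))) :=
  stub_shift_general hprin k hk even Sel m Hunr Hord bUnr bOrd locUnr locOrd hDU hLI
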